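/- arXiv:0705.4208 — 2 statements merged into one kernel-verified Lean document; each statement's English description precedes it below -/
import Mathlib

section
/- Let R = ℚ + XQ(√2)[[X]], the subring of V = ℚ(√2)[[X]] consisting of power series with rational constant term. Then every nonzero ideal of R is principal as an ideal over its endomorphism ring, i.e., R is a stable domain, but R is not a Prüfer domain. -/
set_option synthInstance.maxHeartbeats 4000000
set_option maxHeartbeats 4000000

open scoped nonZeroDivisors

/-- The field `ℚ(√2)`. -/
@[irreducible] noncomputable def QSqrt2 : IntermediateField ℚ ℝ :=
  IntermediateField.adjoin ℚ {(Real.sqrt 2 : ℝ)}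

/-- The ring `R = ℚ + X·ℚ(√2)[[X]]`: power series over `ℚ(√2)` whose constant term
is rational. -/
@[irreducible] noncomputable def QPlusM : Subring (PowerSeries QSqrt2) :=
  Subring.comap (PowerSeries.constantCoeff (R := QSqrt2)) (algebraMap ℚ QSqrt2).range

/-!
Let `R = k + X·F⟦X⟧` for a quadratic extension `F/k`. If `n` is the least order of an element of
a nonzero ideal `I`, then `I` contains `X^(n+1)·F⟦X⟧`, and the leading coefficients of order `n`
of elements of `I` form a nonzero `k`-subspace of `F`. If it is a line, `I` is principal;
otherwise it is all of `F`, and `I = X^n·F⟦X⟧` with `n ≥ 1`. Either way `I = c·W` in the fraction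
field, with `c` a unit and `W` a ring (`R` or `F⟦X⟧`), whence `(I : I) = W` and `I·(W : I) = W`.
For `s ∈ F \ k` the ideal `X·F⟦X⟧ = (X, sX)` is finitely generated but not invertible: an
invertible ideal has endomorphism ring `R`, while that of `X·F⟦X⟧` contains `F⟦X⟧`.
-/

open Module

namespace Submodule

variable {R A : Type*} [CommSemiring R] [CommSemiring A] [Algebra R A]

theorem div_self_le_one_of_mul_one_div_eq_one {I : Submodule R A} (h : I * (1 / I) = 1) :
    I / I ≤ 1 :=
  calc I / I = (1 / I) * (I / I * I) := by rw [mul_comm, mul_assoc, h, mul_one]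
    _ ≤ (1 / I) * I := mul_le_mul_right (le_div_iff_mul_le.mp le_rfl) _
    _ = 1 := by rw [mul_comm, h]

variable {c d : A}

theorem span_singleton_mul_span_singleton_eq_one (hcd : c * d = 1) :
    span R {c} * span R {d} = 1 := by
  rw [span_mul_span, Set.singleton_mul_singleton, hcd, one_eq_span]

variable {S : Subalgebra R A}

theorem span_singleton_mul_toSubmodule_div_self (hcd : c * d = 1) :
    span R {c} * Subalgebra.toSubmodule S / (span R {c} * Subalgebra.toSubmodule S) =
      Subalgebra.toSubmodule S := by
  have hcd' := span_singleton_mul_span_singleton_eq_one (R := R) hcd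
  set J := span R {c} * Subalgebra.toSubmodule S
  have hcJ : span R {c} ≤ J :=
    calc span R {c} = span R {c} * 1 := (mul_one _).symm
      _ ≤ J := mul_le_mul_right (one_le.mpr S.one_mem) _
  refine le_antisymm ?_ (le_div_iff_mul_le.mpr ?_)
  · calc J / J = span R {d} * (J / J * span R {c}) := by rw [mul_comm, mul_assoc, hcd', mul_one]
      _ ≤ span R {d} * (J / J * J) := mul_le_mul_right (mul_le_mul_right hcJ _) _
      _ ≤ span R {d} * J := mul_le_mul_right (le_div_iff_mul_le.mp le_rfl) _
      _ = Subalgebra.toSubmodule S := by rw [mul_left_comm, ← mul_assoc, hcd', one_mul]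
  · rw [mul_left_comm, S.isIdempotentElem_toSubmodule.eq]

theorem span_singleton_mul_toSubmodule_mul_div (hcd : c * d = 1) :
    span R {c} * Subalgebra.toSubmodule S *
        (Subalgebra.toSubmodule S / (span R {c} * Subalgebra.toSubmodule S)) =
      Subalgebra.toSubmodule S := by
  have hcd' := span_singleton_mul_span_singleton_eq_one (R := R) hcd
  set J := span R {c} * Subalgebra.toSubmodule S
  have hJd : J * (span R {d} * Subalgebra.toSubmodule S) = Subalgebra.toSubmodule S := by
    rw [mul_mul_mul_comm, hcd', S.isIdempotentElem_toSubmodule.eq, one_mul]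
  refine le_antisymm ?_ ?_
  · rw [mul_comm]
    exact le_div_iff_mul_le.mp le_rfl
  · calc Subalgebra.toSubmodule S = J * (span R {d} * Subalgebra.toSubmodule S) := hJd.symm
      _ ≤ J * (Subalgebra.toSubmodule S / J) :=
        mul_le_mul_right (le_div_iff_mul_le.mpr (by rw [mul_comm, hJd])) _

end Submodule

theorem exists_smul_add_smul_eq_of_finrank_eq_two {K V : Type*} [Field K] [AddCommGroup V]
    [Module K V] (h : finrank K V = 2) {x y : V} (hx : x ≠ 0) (hxy : ∀ a : K, a • x ≠ y)
    (z : V) : ∃ a b : K, a • x + b • y = z := by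
  have hspan := ((LinearIndependent.pair_iff' hx).mpr hxy).span_eq_top_of_card_eq_finrank
    (by rw [Fintype.card_fin, h])
  rw [Matrix.range_cons_cons_empty] at hspan
  exact Submodule.mem_span_pair.mp (hspan ▸ Submodule.mem_top)

theorem exists_notMem_range_algebraMap {k F : Type*} [Field k] [Field F] [Algebra k F]
    (h : finrank k F ≠ 1) : ∃ s : F, s ∉ (algebraMap k F).range := by
  by_contra! hs
  exact h (Module.finrank_of_bijective_algebraMap
    ⟨(algebraMap k F).injective, fun s => RingHom.mem_range.mp (hs s)⟩)

noncomputable section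

namespace PowerSeries

theorem exists_X_pow_mul_mem_of_ne_bot {A : Type*} [Ring A] {S : Subring A⟦X⟧}
    {I : Ideal S} (hI : I ≠ ⊥) :
    ∃ n, ∃ f ∈ I, ∃ u, (f : A⟦X⟧) = X ^ n * u ∧ constantCoeff u ≠ 0 ∧
      ∀ g ∈ I, X ^ n ∣ (g : A⟦X⟧) := by
  classical
  have hP : ∃ n, ∃ f ∈ I, coeff n (f : A⟦X⟧) ≠ 0 := by
    obtain ⟨f, hf, hf0⟩ := Submodule.exists_mem_ne_zero_of_ne_bot hI
    by_contra! h
    exact hf0 (Subtype.ext (ext fun n => h n f hf))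
  have hdvd : ∀ g ∈ I, X ^ Nat.find hP ∣ (g : A⟦X⟧) := fun g hg =>
    X_pow_dvd_iff.mpr fun m hm => not_not.mp fun h => Nat.find_min hP hm ⟨g, hg, h⟩
  obtain ⟨f, hf, hfn⟩ := Nat.find_spec hP
  obtain ⟨u, hu⟩ := hdvd f hf
  refine ⟨Nat.find hP, f, hf, u, hu, ?_, hdvd⟩
  rwa [hu, coeff_X_pow_mul', if_pos le_rfl, Nat.sub_self, coeff_zero_eq_constantCoeff] at hfn

variable (k F : Type*) [Field k] [Field F] [Algebra k F]

def constantCoeffSubring : Subring F⟦X⟧ :=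
  Subring.comap constantCoeff (algebraMap k F).range

local notation "R" => constantCoeffSubring k F

namespace constantCoeffSubring

variable {k F}

theorem mem_of_X_dvd {f : F⟦X⟧} (h : X ∣ f) : f ∈ R :=
  ⟨0, by rw [map_zero, X_dvd_iff.mp h]⟩

theorem C_algebraMap_mem (a : k) : C (algebraMap k F a) ∈ R := ⟨a, by simp⟩

variable (k) in
def mulX (v : F⟦X⟧) : R := ⟨X * v, mem_of_X_dvd (dvd_mul_right X v)⟩

variable (k F) in
def idealXPow (n : ℕ) : Ideal R :=
  (Ideal.span {(X : F⟦X⟧) ^ n}).comap (constantCoeffSubring k F).subtype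

theorem mem_idealXPow {n : ℕ} {g : R} : g ∈ idealXPow k F n ↔ X ^ n ∣ (g : F⟦X⟧) :=
  Ideal.mem_comap.trans Ideal.mem_span_singleton

theorem mem_of_X_pow_succ_dvd {I : Ideal R} {f : R} (hf : f ∈ I) {n : ℕ} {u : F⟦X⟧}
    (hfu : (f : F⟦X⟧) = X ^ n * u) (hu : constantCoeff u ≠ 0) {g : R}
    (hg : X ^ (n + 1) ∣ (g : F⟦X⟧)) : g ∈ I := by
  obtain ⟨w, hw⟩ := hg
  have : g = mulX k (u⁻¹ * w) * f := by
    ext1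
    rw [Subring.coe_mul, hfu, hw, mulX]
    linear_combination (X ^ (n + 1) * w) * (PowerSeries.inv_mul_cancel u hu).symm
  rw [this]
  exact I.mul_mem_left _ hf

theorem mem_span_singleton_of_constantCoeff_eq {f g : R} {n : ℕ} {u v : F⟦X⟧}
    (hfu : (f : F⟦X⟧) = X ^ n * u) (hgv : (g : F⟦X⟧) = X ^ n * v) (hu : constantCoeff u ≠ 0)
    {a : k} (hvu : constantCoeff v = algebraMap k F a * constantCoeff u) :
    g ∈ Ideal.span {f} := by
  have hmem : v * u⁻¹ ∈ R :=
    ⟨a, by rw [map_mul, constantCoeff_inv, hvu, mul_inv_cancel_right₀ hu]⟩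
  refine Ideal.mem_span_singleton'.mpr ⟨⟨v * u⁻¹, hmem⟩, Subtype.ext ?_⟩
  rw [Subring.coe_mul, Subtype.coe_mk, hfu, hgv]
  linear_combination (X ^ n * v) * (PowerSeries.inv_mul_cancel u hu)

theorem idealXPow_le_of_constantCoeff_ne (hkF : finrank k F = 2) {I : Ideal R} {f g : R}
    (hf : f ∈ I) (hg : g ∈ I) {n : ℕ} {u v : F⟦X⟧}
    (hfu : (f : F⟦X⟧) = X ^ n * u) (hgv : (g : F⟦X⟧) = X ^ n * v) (hu : constantCoeff u ≠ 0)
    (hvu : ∀ a : k, constantCoeff v ≠ algebraMap k F a * constantCoeff u) :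
    idealXPow k F n ≤ I := by
  intro h hh
  obtain ⟨w, hw⟩ := mem_idealXPow.mp hh
  obtain ⟨a, b, hab⟩ := exists_smul_add_smul_eq_of_finrank_eq_two hkF hu
    (fun a => by rw [Algebra.smul_def]; exact (hvu a).symm) (constantCoeff w)
  obtain ⟨ca, hca⟩ : ∃ ca : R, (ca : F⟦X⟧) = C (algebraMap k F a) :=
    ⟨⟨_, C_algebraMap_mem a⟩, rfl⟩
  obtain ⟨cb, hcb⟩ : ∃ cb : R, (cb : F⟦X⟧) = C (algebraMap k F b) :=
    ⟨⟨_, C_algebraMap_mem b⟩, rfl⟩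
  have hrest : h - ca * f - cb * g ∈ I := by
    refine mem_of_X_pow_succ_dvd hf hfu hu ?_
    have hcoe : ((h - ca * f - cb * g : R) : F⟦X⟧) =
        X ^ n * (w - C (algebraMap k F a) * u - C (algebraMap k F b) * v) := by
      simp only [AddSubgroupClass.coe_sub, MulMemClass.coe_mul, hw, hfu, hgv, hca, hcb]
      ring
    rw [hcoe, pow_succ]
    refine mul_dvd_mul_left _ (X_dvd_iff.mpr ?_)
    simp only [map_sub, map_mul, constantCoeff_C, ← hab, Algebra.smul_def]
    ring
  convert I.add_mem (I.add_mem hrest (I.mul_mem_left ca hf)) (I.mul_mem_left cb hg) using 1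
  ring

theorem eq_span_singleton_or_eq_idealXPow (hkF : finrank k F = 2) {I : Ideal R} (hI : I ≠ ⊥) :
    (∃ f, I = Ideal.span {f}) ∨ ∃ n ≠ 0, I = idealXPow k F n := by
  obtain ⟨n, f, hf, u, hfu, hu, hdvd⟩ := exists_X_pow_mul_mem_of_ne_bot hI
  by_cases hprin : ∀ g ∈ I, ∀ v, (g : F⟦X⟧) = X ^ n * v →
      ∃ a : k, constantCoeff v = algebraMap k F a * constantCoeff u
  · refine Or.inl ⟨f, le_antisymm (fun g hg => ?_) (Ideal.span_le.mpr (by simpa using hf))⟩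
    obtain ⟨v, hv⟩ := hdvd g hg
    obtain ⟨a, ha⟩ := hprin g hg v hv
    exact mem_span_singleton_of_constantCoeff_eq hfu hv hu ha
  push Not at hprin
  obtain ⟨g, hg, v, hgv, hvu⟩ := hprin
  refine Or.inr ⟨n, ?_, le_antisymm (fun h hh => mem_idealXPow.mpr (hdvd h hh))
    (idealXPow_le_of_constantCoeff_ne hkF hf hg hfu hgv hu hvu)⟩
  -- for `n = 0` the leading coefficients are constant terms, which lie in `k`
  rintro rfl
  obtain ⟨p, hp⟩ := f.2
  obtain ⟨q, hq⟩ := g.2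
  rw [pow_zero, one_mul] at hfu hgv
  rw [← hfu, ← hp] at hu
  apply hvu (q / p)
  rw [← hfu, ← hgv, ← hp, ← hq, map_div₀, div_mul_cancel₀ _ hu]

variable (K : Type*) [Field K] [Algebra (constantCoeffSubring k F) K]
  [IsFractionRing (constantCoeffSubring k F) K]

theorem algebraMap_mulX_one_ne_zero : algebraMap R K (mulX k (1 : F⟦X⟧)) ≠ 0 :=
  (map_ne_zero_iff _ (IsFractionRing.injective R K)).mpr fun h => by
    simpa [mulX] using congrArg Subtype.val h

variable (k F) in
def toFractionRing : F⟦X⟧ →ₐ[R] K where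
  toFun v := algebraMap R K (mulX k v) / algebraMap R K (mulX k 1)
  map_one' := div_self (algebraMap_mulX_one_ne_zero K)
  map_mul' v w := by
    have hvw : mulX k (v * w) * mulX k 1 = mulX k v * mulX k w :=
      Subtype.ext (by simp [mulX]; ring)
    rw [div_mul_div_comm, ← map_mul _ (mulX k v), ← hvw, map_mul,
      mul_div_mul_right _ _ (algebraMap_mulX_one_ne_zero K)]
  map_zero' := by
    have : mulX k (0 : F⟦X⟧) = 0 := Subtype.ext (mul_zero X)
    rw [this, map_zero, zero_div]
  map_add' v w := by
    have : mulX k (v + w) = mulX k v + mulX k w := Subtype.ext (mul_add X v w)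
    rw [this, map_add, add_div]
  commutes' r := by
    have : mulX k (algebraMap _ F⟦X⟧ r) = r * mulX k 1 :=
      Subtype.ext (show X * (r : F⟦X⟧) = (r : F⟦X⟧) * (X * 1) by ring)
    rw [div_eq_iff (algebraMap_mulX_one_ne_zero K), this, map_mul]

theorem toFractionRing_coe (r : R) : toFractionRing k F K (r : F⟦X⟧) = algebraMap R K r :=
  (toFractionRing k F K).commutes r

theorem toFractionRing_injective : Function.Injective (toFractionRing k F K) := fun v w h => by
  have h' : algebraMap R K (mulX k v) / algebraMap R K (mulX k 1) =
      algebraMap R K (mulX k w) / algebraMap R K (mulX k 1) := h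
  have := IsFractionRing.injective R K ((div_left_inj' (algebraMap_mulX_one_ne_zero K)).mp h')
  exact mul_left_cancel₀ X_ne_zero (congrArg Subtype.val this)

theorem map_idealXPow {n : ℕ} (hn : n ≠ 0) :
    Submodule.map (Algebra.linearMap R K) (idealXPow k F n) =
      Submodule.span R {toFractionRing k F K X ^ n} *
        Subalgebra.toSubmodule (toFractionRing k F K).range := by
  ext y
  simp only [Submodule.mem_map, Submodule.mem_span_singleton_mul, Subalgebra.mem_toSubmodule,
    AlgHom.mem_range, Algebra.linearMap_apply]
  constructor
  · rintro ⟨g, hg, rfl⟩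
    obtain ⟨v, hv⟩ := mem_idealXPow.mp hg
    exact ⟨_, ⟨v, rfl⟩, by rw [← map_pow, ← map_mul, ← hv, toFractionRing_coe]⟩
  · rintro ⟨_, ⟨v, rfl⟩, rfl⟩
    refine ⟨⟨X ^ n * v, mem_of_X_dvd (dvd_mul_of_dvd_left (dvd_pow_self X hn) v)⟩,
      mem_idealXPow.mpr (dvd_mul_right _ _), ?_⟩
    rw [← toFractionRing_coe, Subtype.coe_mk, map_mul, map_pow]

theorem map_mul_div_self_div_map_eq_div_self (hkF : finrank k F = 2) {I : Ideal R} (hI : I ≠ ⊥) :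
    Submodule.map (Algebra.linearMap R K) I * (Submodule.map (Algebra.linearMap R K) I /
        Submodule.map (Algebra.linearMap R K) I / Submodule.map (Algebra.linearMap R K) I) =
      Submodule.map (Algebra.linearMap R K) I / Submodule.map (Algebra.linearMap R K) I := by
  suffices ∃ (c d : K) (S : Subalgebra R K), c * d = 1 ∧
      Submodule.map (Algebra.linearMap R K) I = Submodule.span R {c} * Subalgebra.toSubmodule S by
    obtain ⟨c, d, S, hcd, hIS⟩ := this
    rw [hIS, Submodule.span_singleton_mul_toSubmodule_div_self hcd,
      Submodule.span_singleton_mul_toSubmodule_mul_div hcd]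
  rcases eq_span_singleton_or_eq_idealXPow hkF hI with ⟨f, rfl⟩ | ⟨n, hn, rfl⟩
  · have hf : algebraMap R K f ≠ 0 := (map_ne_zero_iff _ (IsFractionRing.injective R K)).mpr
      fun h => hI (by rw [h, Ideal.span_singleton_eq_bot])
    refine ⟨_, _, ⊥, mul_inv_cancel₀ hf, ?_⟩
    rw [Algebra.toSubmodule_bot, mul_one, Ideal.span, Submodule.map_span, Set.image_singleton,
      Algebra.linearMap_apply]
  · have hX : toFractionRing k F K X ^ n ≠ 0 :=
      pow_ne_zero n ((map_ne_zero_iff _ (toFractionRing_injective K)).mpr X_ne_zero)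
    exact ⟨_, _, _, mul_inv_cancel₀ hX, map_idealXPow K hn⟩

theorem idealXPow_ne_bot (n : ℕ) : idealXPow k F n ≠ ⊥ := fun h => by
  have : mulX k ((X : F⟦X⟧) ^ n) ∈ idealXPow k F n := mem_idealXPow.mpr (dvd_mul_left _ _)
  rw [h, Ideal.mem_bot] at this
  exact pow_ne_zero (n + 1) (X_ne_zero : (X : F⟦X⟧) ≠ 0)
    (by simpa [mulX, pow_succ'] using congrArg Subtype.val this)

theorem idealXPow_one_fg (hkF : finrank k F = 2) : (idealXPow k F 1).FG := by
  obtain ⟨s, hs⟩ := exists_notMem_range_algebraMap (k := k) (F := F) (by omega)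
  refine Submodule.fg_def.mpr ⟨{mulX k (1 : F⟦X⟧), mulX k (C s)}, Set.toFinite _,
    le_antisymm ?_ ?_⟩
  · rw [Submodule.span_le, Set.insert_subset_iff, Set.singleton_subset_iff]
    exact ⟨mem_idealXPow.mpr (by simp [mulX]), mem_idealXPow.mpr (by simp [mulX])⟩
  · exact idealXPow_le_of_constantCoeff_ne (f := mulX k 1) (g := mulX k (C s)) (u := 1) (v := C s)
      hkF (Ideal.subset_span (by simp)) (Ideal.subset_span (by simp)) (by simp [mulX])
      (by simp [mulX]) (by simp) fun a h => hs ⟨a, by simpa using h.symm⟩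

theorem map_idealXPow_one_mul_one_div_ne_one (hkF : finrank k F ≠ 1) :
    Submodule.map (Algebra.linearMap R K) (idealXPow k F 1) *
      (1 / Submodule.map (Algebra.linearMap R K) (idealXPow k F 1)) ≠ 1 := fun h => by
  obtain ⟨s, hs⟩ := exists_notMem_range_algebraMap hkF
  have hle := Submodule.div_self_le_one_of_mul_one_div_eq_one h
  have hX : toFractionRing k F K X ^ 1 ≠ 0 :=
    pow_ne_zero 1 ((map_ne_zero_iff _ (toFractionRing_injective K)).mpr X_ne_zero)
  rw [map_idealXPow K one_ne_zero,
    Submodule.span_singleton_mul_toSubmodule_div_self (mul_inv_cancel₀ hX)] at hle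
  obtain ⟨r, hr⟩ := Submodule.mem_one.mp (hle ⟨C s, rfl⟩)
  rw [← toFractionRing_coe] at hr
  obtain ⟨a, ha⟩ := r.2
  exact hs ⟨a, by rw [ha, toFractionRing_injective K hr, constantCoeff_C]⟩

end constantCoeffSubring

end PowerSeries

end

unseal QPlusM in
theorem qPlusM_eq_constantCoeffSubring :
    QPlusM = PowerSeries.constantCoeffSubring ℚ QSqrt2 := rfl

open Polynomial in
unseal QSqrt2 in
theorem finrank_qSqrt2 : finrank ℚ QSqrt2 = 2 := by
  have hmonic : (X ^ 2 - C (2 : ℚ)).Monic := monic_X_pow_sub_C _ two_ne_zero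
  have hroot : aeval (√2 : ℝ) (X ^ 2 - C (2 : ℚ)) = 0 := by simp
  have hirr : Irreducible (X ^ 2 - C (2 : ℚ)) := by
    refine X_pow_sub_C_irreducible_of_prime Nat.prime_two fun b hb => ?_
    have : ¬IsSquare (2 : ℚ) := by
      rw [← irrational_sqrt_ratCast_iff_of_nonneg zero_le_two]
      exact_mod_cast irrational_sqrt_two
    exact this ⟨b, by rw [← hb, sq]⟩
  rw [QSqrt2, IntermediateField.adjoin.finrank ⟨_, hmonic, hroot⟩,
    ← minpoly.eq_of_irreducible_of_monic hirr hroot hmonic, natDegree_X_pow_sub_C]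

/-- `R = ℚ + X·ℚ(√2)[[X]]` is a stable domain (every nonzero ideal is invertible over
its endomorphism ring, computed in the quotient field `K`), but `R` is not a Prüfer
domain (some nonzero finitely generated ideal `I` satisfies `I·(R : I) ≠ R`). -/
theorem qPlusM_stable_not_prufer
    (K : Type) [Field K] [Algebra QPlusM K] [IsFractionRing QPlusM K] :
    (∀ I : Ideal QPlusM, I ≠ ⊥ →
      (Submodule.map (Algebra.linearMap QPlusM K) I) *
        (((Submodule.map (Algebra.linearMap QPlusM K) I) /
            (Submodule.map (Algebra.linearMap QPlusM K) I)) /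
          (Submodule.map (Algebra.linearMap QPlusM K) I)) =
      (Submodule.map (Algebra.linearMap QPlusM K) I) /
        (Submodule.map (Algebra.linearMap QPlusM K) I)) ∧
    ¬ (∀ I : Ideal QPlusM, I ≠ ⊥ → I.FG →
      (Submodule.map (Algebra.linearMap QPlusM K) I) *
        (1 / (Submodule.map (Algebra.linearMap QPlusM K) I)) =
      (1 : Submodule QPlusM K)) := by
  open PowerSeries.constantCoeffSubring in
  revert K
  rw [qPlusM_eq_constantCoeffSubring]
  intro K _ _ _
  refine ⟨fun I hI => map_mul_div_self_div_map_eq_div_self K finrank_qSqrt2 hI, fun h => ?_⟩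
  exact map_idealXPow_one_mul_one_div_ne_one K (by rw [finrank_qSqrt2]; norm_num)
    (h _ (idealXPow_ne_bot 1) (idealXPow_one_fg finrank_qSqrt2))
end

section
/- Let V be a valuation domain in which every nonzero nonmaximal prime ideal is not idempotent. Then for every nonzero fractional ideal I of V, the generalized Ratliff-Rush closure Î = {x ∈ K | xI^n ⊆ I^{n+1} for some n ≥ 1} equals the divisorial closure I_v = (V : (V : I)). -/
open scoped nonZeroDivisors

/-!
In a valuation domain the ideals are totally ordered, so a proper idempotent ideal is prime.

`Î ⊆ I_v`: let `x·Iⁿ ⊆ I^{n+1}` and `y ∈ (V : I)`; put `J = yI ⊆ V` and `z = xy`. If `z ∉ V`, then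
`z⁻¹ ∈ M` and `Jⁿ ⊆ z⁻¹J^{n+1} ⊆ J^{n+1}`, so `Jⁿ` is a nonzero proper idempotent ideal, hence a
prime, hence `M` by hypothesis; but then `z⁻¹ ∈ Jⁿ` gives `1 ∈ J^{n+1} = Jⁿ`.

`I_v ⊆ Î`, with `n = 1`: if `x ∈ I_v \ I`, then `I = xM`, because `I ⊆ xmV` for a nonunit `m` would
force `I_v ⊆ xmV ∌ x`. For the same reason `M` is not principal, so `M² = M` and `I² = x²M = xI`.
-/

open FractionalIdeal IsLocalRing

namespace FractionalIdeal

variable {R K : Type*} [CommRing R] [Field K] [Algebra R K] [IsFractionRing R K]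

theorem spanSingleton_inv_mul_cancel_left {z : K} (hz : z ≠ 0) (I : FractionalIdeal R⁰ K) :
    spanSingleton R⁰ z⁻¹ * (spanSingleton R⁰ z * I) = I := by
  rw [← mul_assoc, spanSingleton_mul_spanSingleton, inv_mul_cancel₀ hz, spanSingleton_one, one_mul]

variable [IsDomain R]

protected theorem inv_ne_zero {I : FractionalIdeal R⁰ K} (hI : I ≠ 0) : I⁻¹ ≠ 0 := fun h =>
  (bot_lt_mul_inv hI).ne' (by rw [h, mul_zero]; rfl)

theorem inv_inv_le_spanSingleton {I : FractionalIdeal R⁰ K} (hI : I ≠ 0) {z : K}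
    (hle : I ≤ spanSingleton R⁰ z) : I⁻¹⁻¹ ≤ spanSingleton R⁰ z := by
  have hz : spanSingleton R⁰ z ≠ 0 := ne_bot_of_le_ne_bot hI hle
  calc I⁻¹⁻¹ ≤ (spanSingleton R⁰ z)⁻¹⁻¹ :=
        inv_anti_mono (FractionalIdeal.inv_ne_zero hz) (FractionalIdeal.inv_ne_zero hI)
          (inv_anti_mono hI hz hle)
    _ = spanSingleton R⁰ z := by rw [spanSingleton_inv, spanSingleton_inv, inv_inv]

theorem not_le_spanSingleton_mul_of_mem_inv_inv [IsLocalRing R] {I : FractionalIdeal R⁰ K}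
    (hI : I ≠ 0) {x : K} (hx : x ∈ I⁻¹⁻¹) (hx0 : x ≠ 0) {m : R} (hm : m ∈ maximalIdeal R) :
    ¬I ≤ spanSingleton R⁰ (x * algebraMap R K m) := fun hle => by
  obtain ⟨c, hc⟩ := (mem_spanSingleton _).mp (inv_inv_le_spanSingleton hI hle hx)
  refine (mem_maximalIdeal m).mp hm (.of_mul_eq_one c (IsFractionRing.injective R K ?_))
  rw [Algebra.smul_def] at hc
  apply mul_left_cancel₀ hx0
  rw [map_mul, map_one, mul_one]
  linear_combination hc

end FractionalIdeal

namespace ValuationRing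

variable {V : Type*} [CommRing V] [IsDomain V] [ValuationRing V]

theorem isPrime_of_mul_self_eq {E : Ideal V} (hE : E ≠ ⊤) (hEE : E * E = E) : E.IsPrime := by
  refine ⟨hE, fun {a b} hab => or_iff_not_imp_left.mpr fun ha => ?_⟩
  have hEa : E ≤ Ideal.span {a} :=
    (total_of (· ≤ ·) E _).resolve_right fun h => ha (h (Ideal.mem_span_singleton_self a))
  obtain ⟨e, he, hae⟩ := Ideal.mem_span_singleton_mul.mp (Ideal.mul_mono_left hEa (hEE ▸ hab))
  have ha0 : a ≠ 0 := by
    rintro rfl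
    exact ha E.zero_mem
  rwa [← mul_left_cancel₀ ha0 hae]

theorem maximalIdeal_le_span_singleton {m : V} (hm : m ∈ maximalIdeal V)
    (hm2 : m ∉ maximalIdeal V * maximalIdeal V) : maximalIdeal V ≤ Ideal.span {m} := by
  intro a ha
  rw [Ideal.mem_span_singleton]
  obtain ⟨c, rfl | rfl⟩ := ValuationRing.cond a m
  · have hc : IsUnit c := by
      by_contra hc
      exact hm2 (Ideal.mul_mem_mul ha ((mem_maximalIdeal c).mpr hc))
    exact hc.mul_right_dvd.mpr dvd_rfl
  · exact dvd_mul_right m c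

theorem not_pow_le_span_singleton_mul_pow_succ
    (h : ∀ P : Ideal V, P.IsPrime → P ≠ ⊥ → P ≠ maximalIdeal V → P * P ≠ P)
    {E : Ideal V} (hE : E ≠ ⊥) {π : V} (hπ : π ∈ maximalIdeal V) (n : ℕ) :
    ¬E ^ n ≤ Ideal.span {π} * E ^ (n + 1) := by
  intro hle
  set F := E ^ n
  rw [pow_succ'] at hle
  have hEF : E * F = F := le_antisymm Ideal.mul_le_right (hle.trans Ideal.mul_le_right)
  rw [hEF] at hle
  have hFF : F * F = F := by
    suffices ∀ k, E ^ k * F = F from this n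
    intro k
    induction k with
    | zero => rw [pow_zero, one_mul]
    | succ k ih => rw [pow_succ, mul_assoc, hEF, ih]
  have hF0 : F ≠ ⊥ := pow_ne_zero n hE
  have hFM : F ≤ maximalIdeal V :=
    hle.trans (Ideal.mul_le_left.trans ((Ideal.span_singleton_le_iff_mem _).mpr hπ))
  have hFmax : F = maximalIdeal V := by
    by_contra hne
    exact h F (isPrime_of_mul_self_eq (ne_top_of_le_ne_top (maximalIdeal.isMaximal V).ne_top hFM)
      hFF) hF0 hne hFF
  obtain ⟨f, hf, hπf⟩ := Ideal.mem_span_singleton_mul.mp (hle (hFmax ▸ hπ))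
  have hπ0 : π ≠ 0 := by
    rintro rfl
    exact hF0 (le_bot_iff.mp (by simpa using hle))
  have hf1 : f = 1 := mul_left_cancel₀ hπ0 (hπf.trans (mul_one π).symm)
  exact (maximalIdeal.isMaximal V).ne_top ((Ideal.eq_top_iff_one _).mpr (hFM (hf1 ▸ hf)))

variable {K : Type*} [Field K] [Algebra V K] [IsFractionRing V K]

theorem exists_mem_maximalIdeal_algebraMap_eq_inv {z : K}
    (hz : z ∉ (1 : FractionalIdeal V⁰ K)) : ∃ π ∈ maximalIdeal V, algebraMap V K π = z⁻¹ := by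
  obtain ⟨c, hc⟩ | ⟨π, hπ⟩ := isInteger_or_isInteger V z
  · exact absurd ((mem_one_iff _).mpr ⟨c, hc⟩) hz
  refine ⟨π, (mem_maximalIdeal π).mpr fun hu => hz ((mem_one_iff _).mpr ⟨↑hu.unit⁻¹, ?_⟩), hπ⟩
  rw [map_units_inv, IsUnit.unit_spec, hπ, inv_inv]

theorem le_spanSingleton_mul_maximalIdeal {I : FractionalIdeal V⁰ K} {x : K} (hx : x ∉ I) :
    I ≤ spanSingleton V⁰ x * (maximalIdeal V : FractionalIdeal V⁰ K) := by
  intro a ha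
  rcases eq_or_ne a 0 with rfl | ha0
  · exact zero_mem _
  have hx0 : x ≠ 0 := by
    rintro rfl
    exact hx (zero_mem _)
  have hxa : x * a⁻¹ ∉ (1 : FractionalIdeal V⁰ K) := fun h => hx <| by
    simpa only [one_mul, inv_mul_cancel_right₀ ha0] using mul_mem_mul h ha
  obtain ⟨π, hπ, hπa⟩ := exists_mem_maximalIdeal_algebraMap_eq_inv hxa
  refine mem_singleton_mul.mpr ⟨algebraMap V K π, (mem_coeIdeal _).mpr ⟨π, hπ, rfl⟩, ?_⟩
  rw [hπa, mul_inv, inv_inv, mul_inv_cancel_left₀ hx0]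

theorem mem_one_of_spanSingleton_mul_pow_le
    (h : ∀ P : Ideal V, P.IsPrime → P ≠ ⊥ → P ≠ maximalIdeal V → P * P ≠ P)
    {J : FractionalIdeal V⁰ K} (hJ : J ≤ 1) (hJ0 : J ≠ 0) {z : K} {n : ℕ}
    (hz : spanSingleton V⁰ z * J ^ n ≤ J ^ (n + 1)) : z ∈ (1 : FractionalIdeal V⁰ K) := by
  by_contra hz1
  obtain ⟨π, hπ, hπz⟩ := exists_mem_maximalIdeal_algebraMap_eq_inv hz1
  obtain ⟨E, rfl⟩ := le_one_iff_exists_coeIdeal.mp hJ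
  refine not_pow_le_span_singleton_mul_pow_succ h (coeIdeal_ne_zero.mp hJ0) hπ n ?_
  have hz0 : z ≠ 0 := by
    rintro rfl
    exact hz1 (zero_mem _)
  rw [← coeIdeal_le_coeIdeal K, coeIdeal_mul, coeIdeal_span_singleton, coeIdeal_pow,
    coeIdeal_pow, hπz]
  calc (E : FractionalIdeal V⁰ K) ^ n
      = spanSingleton V⁰ z⁻¹ * (spanSingleton V⁰ z * E ^ n) :=
        (spanSingleton_inv_mul_cancel_left hz0 _).symm
    _ ≤ spanSingleton V⁰ z⁻¹ * E ^ (n + 1) := by gcongr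

theorem mem_inv_inv_of_mul_pow_mem
    (h : ∀ P : Ideal V, P.IsPrime → P ≠ ⊥ → P ≠ maximalIdeal V → P * P ≠ P)
    {I : FractionalIdeal V⁰ K} (hI : I ≠ 0) {x : K} {n : ℕ}
    (hx : ∀ y ∈ I ^ n, x * y ∈ I ^ (n + 1)) : x ∈ I⁻¹⁻¹ := by
  rw [mem_inv_iff (FractionalIdeal.inv_ne_zero hI)]
  intro y hy
  rcases eq_or_ne y 0 with rfl | hy0
  · rw [mul_zero]
    exact zero_mem _
  refine mem_one_of_spanSingleton_mul_pow_le h (J := spanSingleton V⁰ y * I) ?_ ?_ (n := n) ?_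
  · exact spanSingleton_mul_le_iff.mpr ((mem_inv_iff hI).mp hy)
  · intro h0
    rw [← spanSingleton_inv_mul_cancel_left hy0 I, h0, mul_zero] at hI
    exact hI rfl
  · calc spanSingleton V⁰ (x * y) * (spanSingleton V⁰ y * I) ^ n
        = spanSingleton V⁰ y ^ (n + 1) * (spanSingleton V⁰ x * I ^ n) := by
          rw [← spanSingleton_mul_spanSingleton]
          ring
      _ ≤ spanSingleton V⁰ y ^ (n + 1) * I ^ (n + 1) := by
          gcongr
          exact spanSingleton_mul_le_iff.mpr hx
      _ = (spanSingleton V⁰ y * I) ^ (n + 1) := by ring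

theorem mul_mem_sq_of_mem_inv_inv {I : FractionalIdeal V⁰ K} (hI : I ≠ 0) {x y : K}
    (hx : x ∈ I⁻¹⁻¹) (hy : y ∈ I) : x * y ∈ I ^ 2 := by
  by_cases hxI : x ∈ I
  · rw [sq]
    exact mul_mem_mul hxI hy
  have hx0 : x ≠ 0 := by
    rintro rfl
    exact hxI (zero_mem _)
  set M : Ideal V := maximalIdeal V
  have hxM : ∀ m ∈ M, ¬I ≤ spanSingleton V⁰ (x * algebraMap V K m) :=
    fun m hm => not_le_spanSingleton_mul_of_mem_inv_inv hI hx hx0 hm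
  have hIM : I = spanSingleton V⁰ x * (M : FractionalIdeal V⁰ K) := by
    refine le_antisymm (le_spanSingleton_mul_maximalIdeal hxI) (spanSingleton_mul_le_iff.mpr ?_)
    intro z hz
    obtain ⟨m, hm, rfl⟩ := (mem_coeIdeal _).mp hz
    by_contra hxm
    refine hxM m hm ((le_spanSingleton_mul_maximalIdeal hxm).trans ?_)
    exact mul_le_of_le_one_right' coeIdeal_le_one
  have hMM : M * M = M := by
    by_contra hne
    obtain ⟨m, hm, hm2⟩ := SetLike.exists_of_lt (lt_of_le_of_ne Ideal.mul_le_left hne)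
    refine hxM m hm ?_
    rw [hIM, ← spanSingleton_mul_spanSingleton, ← coeIdeal_span_singleton]
    gcongr
    exact maximalIdeal_le_span_singleton hm hm2
  have hsq : I ^ 2 = spanSingleton V⁰ x * I := by
    rw [hIM, mul_pow, sq, sq, ← coeIdeal_mul, hMM, ← mul_assoc, spanSingleton_mul_spanSingleton]
  rw [hsq]
  exact mul_mem_mul (mem_spanSingleton_self _ _) hy

end ValuationRing

-- `1 / (1 / I)` unfolds to `I⁻¹⁻¹`, the fractional ideal inverse being `I⁻¹ = 1 / I`.
/-- If no nonzero nonmaximal prime of a valuation domain `V` is idempotent, then for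
every nonzero fractional ideal `I` of `V`, the generalized Ratliff-Rush closure
`Î = {x ∈ K | x·Iⁿ ⊆ I^{n+1} for some n ≥ 1}` equals the divisorial closure
`I_v = (V : (V : I))`. -/
theorem genRatliffRush_eq_divisorial {V : Type*} [CommRing V] [IsDomain V]
    [ValuationRing V]
    (h : ∀ P : Ideal V, P.IsPrime → P ≠ ⊥ → P ≠ IsLocalRing.maximalIdeal V → P * P ≠ P)
    (I : FractionalIdeal V⁰ (FractionRing V)) (hI : I ≠ 0) :
    ∀ x : FractionRing V,
      (∃ n : ℕ, 1 ≤ n ∧ ∀ y ∈ I ^ n, x * y ∈ I ^ (n + 1)) ↔ x ∈ 1 / (1 / I) := by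
  intro x
  constructor
  · rintro ⟨n, -, hx⟩
    exact ValuationRing.mem_inv_inv_of_mul_pow_mem h hI hx
  · intro hx
    refine ⟨1, le_rfl, fun y hy => ?_⟩
    exact ValuationRing.mul_mem_sq_of_mem_inv_inv hI hx (by rwa [pow_one] at hy)
end
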